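/- In gl(2,ℝ) with the Vaisman-type structure ω = e⁰∧(e⁺ - e⁻) - 2h*∧(e⁺ + e⁻) and μ = 1 complex structure, the metric g = -ω∘J given by formula g = -(a₊ - a₋)/2·(e⁰)² - 2(a₊-a₋)(h*)² + 2(a₊+a₋)e⁰h* - 2a₊(e⁺)² + 2a₋(e⁻)² - a_h e⁰(e⁺+e⁻) - 2a_h h*(e⁺-e⁻) is positive definite if and only if -a_h² > 4 a₊ a₋ and a₋ > 0 > a₊. -/

import Mathlib

/-!
STATEMENT 18. In `gl(2,ℝ)` with the lcs structure `ω = e⁰ ∧ φ + dφ`,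
`φ = a_h h* + a₊ e⁺ + a₋ e⁻`, and the `μ = 1` complex structure, the locally conformally
pseudo-Kähler metric `g = -ω ∘ J`, given by
`g = -(a₊ - a₋)/2 (e⁰)² - 2(a₊ - a₋)(h*)² + 2(a₊ + a₋) e⁰h* - 2a₊ (e⁺)² + 2a₋ (e⁻)²
     - a_h e⁰(e⁺ + e⁻) - 2a_h h*(e⁺ - e⁻)`,
is positive definite if and only if `-a_h² > 4 a₊ a₋` and `a₋ > 0 > a₊`.

We realize `gl(2,ℝ)` on `Fin 4 → ℝ` (coordinates w.r.t. `e₀, h, e₊, e₋`); products of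
1-forms denote symmetric products.
-/

namespace Stmt18

/-- the metric `g` of the formula above, as a symmetric bilinear form. -/
noncomputable def met (ah ap am : ℝ) (u v : Fin 4 → ℝ) : ℝ :=
  -((ap - am) / 2) * (u 0 * v 0) - 2 * (ap - am) * (u 1 * v 1)
  + (ap + am) * (u 0 * v 1 + u 1 * v 0)
  - 2 * ap * (u 2 * v 2) + 2 * am * (u 3 * v 3)
  - ah / 2 * (u 0 * v 2 + u 2 * v 0) - ah / 2 * (u 0 * v 3 + u 3 * v 0)
  - ah * (u 1 * v 2 + u 2 * v 1) + ah * (u 1 * v 3 + u 3 * v 1)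

end Stmt18

/-!
Necessity: `g(e₊, e₊) = -2a₊` and `g(e₋, e₋) = 2a₋`, and the vector
`w = 4a₊a₋ h - 2a_h a₋ e₊ - 2a_h a₊ e₋`, which spans the `g`-orthogonal complement of `e₊, e₋`
in `⟨h, e₊, e₋⟩`, has `g(w, w) = 8a₊a₋(a₋ - a₊)(a_h² + 4a₊a₋)`.
Sufficiency: completing the squares in the `e₊`- and `e₋`-coordinates and then in the
`e₀`-coordinate writes `-8a₊a₋(a₋ - a₊) g(u, u)` as a sum of four squares with positive weights.
-/

namespace Stmt18

variable {ah ap am : ℝ}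

lemma met_self_mul_eq_sum_sq (u : Fin 4 → ℝ) :
    (-8 * ap * am * (am - ap)) * met ah ap am u u
      = am * (am - ap) * (4 * ap * u 2 + ah * (u 0 + 2 * u 1)) ^ 2
        + (-ap) * (am - ap) * (4 * am * u 3 + ah * (2 * u 1 - u 0)) ^ 2
        + (-(ah ^ 2 + 4 * ap * am)) * ((am - ap) * u 0 + 2 * (ap + am) * u 1) ^ 2
        + 16 * (ap * am) * (ah ^ 2 + 4 * ap * am) * u 1 ^ 2 := by
  simp only [met]
  ring

lemma eq_zero_of_mul_sq_nonpos {p x : ℝ} (hp : 0 < p) (h : p * x ^ 2 ≤ 0) : x = 0 :=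
  (sq_nonpos_iff x).mp (nonpos_of_mul_nonpos_right h hp)

lemma eq_zero_of_weighted_sum_sq_nonpos {p₁ p₂ p₃ p₄ x₁ x₂ x₃ x₄ : ℝ} (hp₁ : 0 < p₁)
    (hp₂ : 0 < p₂) (hp₃ : 0 < p₃) (hp₄ : 0 < p₄)
    (h : p₁ * x₁ ^ 2 + p₂ * x₂ ^ 2 + p₃ * x₃ ^ 2 + p₄ * x₄ ^ 2 ≤ 0) :
    x₁ = 0 ∧ x₂ = 0 ∧ x₃ = 0 ∧ x₄ = 0 := by
  have t₁ : 0 ≤ p₁ * x₁ ^ 2 := by positivity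
  have t₂ : 0 ≤ p₂ * x₂ ^ 2 := by positivity
  have t₃ : 0 ≤ p₃ * x₃ ^ 2 := by positivity
  have t₄ : 0 ≤ p₄ * x₄ ^ 2 := by positivity
  exact ⟨eq_zero_of_mul_sq_nonpos hp₁ (by linarith), eq_zero_of_mul_sq_nonpos hp₂ (by linarith),
    eq_zero_of_mul_sq_nonpos hp₃ (by linarith), eq_zero_of_mul_sq_nonpos hp₄ (by linarith)⟩

theorem met_self_pos (hK : ah ^ 2 + 4 * ap * am < 0) (hm : 0 < am) (hp : ap < 0)
    {u : Fin 4 → ℝ} (hu : u ≠ 0) : 0 < met ah ap am u u := by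
  have hmp : 0 < am - ap := by linarith
  have hpm : ap * am < 0 := mul_neg_of_neg_of_pos hp hm
  have hD : 0 < -8 * ap * am * (am - ap) := by nlinarith
  by_contra! hle
  apply hu
  have hsum := met_self_mul_eq_sum_sq (ah := ah) u ▸ mul_nonpos_of_nonneg_of_nonpos hD.le hle
  obtain ⟨h₂, h₃, h₀, h₁⟩ := eq_zero_of_weighted_sum_sq_nonpos (mul_pos hm hmp)
    (mul_pos (neg_pos.mpr hp) hmp) (by linarith) (by nlinarith) hsum
  have h₀' : u 0 = 0 := by
    simpa [h₁, hmp.ne'] using h₀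
  funext i
  fin_cases i
  · exact h₀'
  · exact h₁
  · simpa [h₀', h₁, hp.ne] using h₂
  · simpa [h₀', h₁, hm.ne'] using h₃

lemma met_orthogonal_witness :
    met ah ap am ![0, 4 * ap * am, -2 * ah * am, -2 * ah * ap]
        ![0, 4 * ap * am, -2 * ah * am, -2 * ah * ap]
      = 8 * (ap * am) * (am - ap) * (ah ^ 2 + 4 * ap * am) := by
  simp only [met, Matrix.cons_val]
  ring

theorem conditions_of_met_pos (h : ∀ u : Fin 4 → ℝ, u ≠ 0 → 0 < met ah ap am u u) :
    ah ^ 2 + 4 * ap * am < 0 ∧ 0 < am ∧ ap < 0 := by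
  have hm : 0 < am := by
    have := h ![0, 0, 0, 1] fun h => by simpa using congrFun h 3
    simp only [met, Matrix.cons_val] at this
    linarith
  have hp : ap < 0 := by
    have := h ![0, 0, 1, 0] fun h => by simpa using congrFun h 2
    simp only [met, Matrix.cons_val] at this
    linarith
  have hpm : ap * am < 0 := mul_neg_of_neg_of_pos hp hm
  have hmp : 0 ≤ am - ap := by linarith
  have hw := met_orthogonal_witness (ah := ah) ▸
    h ![0, 4 * ap * am, -2 * ah * am, -2 * ah * ap] fun h => by
      simpa [hp.ne, hm.ne'] using congrFun h 1
  refine ⟨?_, hm, hp⟩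
  have : 0 < (ap * am) * ((am - ap) * (ah ^ 2 + 4 * ap * am)) := by linarith
  exact neg_of_mul_neg_right (neg_of_mul_pos_right this hpm.le) hmp

end Stmt18

open Stmt18 in
theorem stmt18 (ah ap am : ℝ) :
    (∀ u : Fin 4 → ℝ, u ≠ 0 → 0 < met ah ap am u u)
      ↔ (-ah ^ 2 > 4 * ap * am ∧ am > 0 ∧ 0 > ap) := by
  constructor
  · intro h
    obtain ⟨hK, hm, hp⟩ := conditions_of_met_pos h
    exact ⟨by linarith, hm, hp⟩
  · rintro ⟨hK, hm, hp⟩ u hu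
    exact met_self_pos (by linarith) hm hp hu
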